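/- Let φ be a smoothing kernel with associated set G and constant M_φ, let f ∈ C_{‖·‖} and χ > 0. Then S_χ[f] is convex, Lipschitz continuous with constant 1 w.r.t. ‖·‖, continuously differentiable, and its gradient is Lipschitz continuous with constant M_φ/χ: ‖∇S_χ[f](x) − ∇S_χ[f](y)‖_* ≤ χ⁻¹ M_φ ‖x−y‖ for all x, y ∈ E. -/

import Mathlib

open Set Pointwise

/-- `N` is a norm on the real vector space `E`. -/
structure IsNorm {E : Type*} [AddCommGroup E] [Module ℝ E] (N : E → ℝ) : Prop where
  nonneg : ∀ x, 0 ≤ N x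
  eq_zero_iff : ∀ x, N x = 0 ↔ x = 0
  smul : ∀ (c : ℝ) (x : E), N (c • x) = |c| * N x
  add_le : ∀ x y, N (x + y) ≤ N x + N y

/-- The norm dual to `N` (w.r.t. the inner product identification). -/
noncomputable def dualNorm {E : Type*} [NormedAddCommGroup E] [InnerProductSpace ℝ E]
    (N : E → ℝ) (ξ : E) : ℝ :=
  sSup ((fun x => (inner ℝ ξ x : ℝ)) '' {x : E | N x ≤ 1})

/-- `f` is Lipschitz continuous with constant 1 w.r.t. the norm `N`. -/
def LipWrt {E : Type*} [AddCommGroup E] [Module ℝ E] (N : E → ℝ) (f : E → ℝ) : Prop :=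
  ∀ x y, |f x - f y| ≤ N (x - y)

/-- Membership in the class `C_{‖·‖}`: convex and 1-Lipschitz w.r.t. `N`. -/
def MemC {E : Type*} [AddCommGroup E] [Module ℝ E] (N : E → ℝ) (f : E → ℝ) : Prop :=
  ConvexOn ℝ Set.univ f ∧ LipWrt N f

/-- A smoothing kernel: a twice continuously differentiable convex function `φ` on an open
convex set `dom`, with `φ(0) = 0`, `∇φ(0) = 0` (property A), together with a compact convex
set `G ⊆ dom` with `0 ∈ int G` and `φ > N` on `∂G` (property B). -/
structure SmoothingKernel (E : Type*) [NormedAddCommGroup E] [InnerProductSpace ℝ E]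
    [FiniteDimensional ℝ E] (N : E → ℝ) where
  dom : Set E
  φ : E → ℝ
  dom_open : IsOpen dom
  dom_convex : Convex ℝ dom
  φ_smooth : ContDiffOn ℝ 2 φ dom
  φ_convex : ConvexOn ℝ dom φ
  zero_mem_dom : (0 : E) ∈ dom
  φ_zero : φ 0 = 0
  grad_zero : gradient φ 0 = 0
  G : Set E
  G_sub_dom : G ⊆ dom
  G_compact : IsCompact G
  G_convex : Convex ℝ G
  zero_mem_int : (0 : E) ∈ interior G
  φ_gt_norm : ∀ x ∈ frontier G, N x < φ x

/-- Property C: bound `⟨e, ∇²φ(h) e⟩ ≤ M ‖e‖²` on the Hessian quadratic form on `G`. -/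
def HessBound {E : Type*} [NormedAddCommGroup E] [InnerProductSpace ℝ E]
    [FiniteDimensional ℝ E] {N : E → ℝ} (K : SmoothingKernel E N) (M : ℝ) : Prop :=
  ∀ h ∈ K.G, ∀ e : E, iteratedFDeriv ℝ 2 K.φ h ![e, e] ≤ M * N e ^ 2

/-- The scaled smoothing `S_χ[f](x) = min_{h ∈ χ·Dom φ} [f(x+h) + χ φ(h/χ)]`. -/
noncomputable def smoothingScaled {E : Type*} [NormedAddCommGroup E] [InnerProductSpace ℝ E]
    [FiniteDimensional ℝ E] {N : E → ℝ} (K : SmoothingKernel E N) (χ : ℝ) (f : E → ℝ)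
    (x : E) : ℝ :=
  sInf ((fun h => f (x + h) + χ * K.φ (χ⁻¹ • h)) '' (χ • K.dom))

variable {E : Type*} [NormedAddCommGroup E] [InnerProductSpace ℝ E]
  [FiniteDimensional ℝ E]

open Filter Topology
open scoped RealInnerProductSpace

/-!
Any minimiser `u` of `v ↦ f (x + χ • v) + χ * φ v` over `G` satisfies `φ u ≤ N u` (compare with
`v = 0` using the Lipschitz bound on `f`), so it lies in a compact subset of `int G`; as a local
minimiser of a convex function it is a global one, and `S_χ[f] x` is attained there. Convexity and
the Lipschitz bound pass directly from `f` to `S_χ[f]`. Moving the minimiser by `-w / χ` stays in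
`G` uniformly for small `w`, and the Hessian bound on `φ` yields the quadratic upper model
`S (x + w) ≤ S x + ⟪-∇φ u, w⟫ + M / (2χ) * N w ^ 2`. Together with convexity this model makes
`S_χ[f]` differentiable with gradient `-∇φ u`; testing it against the subgradient inequality at
two nearby points bounds the change of the gradient in the dual norm, and chaining along segments
makes that bound global.
-/

section NormFacts

variable {V : Type*} [AddCommGroup V] [Module ℝ V] {N : V → ℝ}

def IsNorm.toSeminorm (hN : IsNorm N) : Seminorm ℝ V :=
  Seminorm.of N hN.add_le fun c x => by rw [hN.smul, Real.norm_eq_abs]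

theorem IsNorm.zero (hN : IsNorm N) : N 0 = 0 := map_zero hN.toSeminorm

theorem IsNorm.neg (hN : IsNorm N) (x : V) : N (-x) = N x := map_neg_eq_map hN.toSeminorm x

theorem IsNorm.smul_of_nonneg (hN : IsNorm N) {c : ℝ} (hc : 0 ≤ c) (x : V) :
    N (c • x) = c * N x := by
  rw [hN.smul, abs_of_nonneg hc]

theorem IsNorm.sub_le_mul_of_local (hN : IsNorm N) {g : V → ℝ} {ρ L : ℝ} (hρ : 0 < ρ)
    (hg : ∀ x y, N (x - y) ≤ ρ → g x - g y ≤ L * N (x - y)) (x y : V) :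
    g x - g y ≤ L * N (x - y) := by
  obtain ⟨n, hn⟩ := exists_nat_gt (N (x - y) / ρ)
  have hn0 : (0 : ℝ) < n := (div_nonneg (hN.nonneg _) hρ.le).trans_lt hn
  set z : ℕ → V := fun k => y + ((k : ℝ) / n) • (x - y)
  have hstep : ∀ k, z (k + 1) - z k = (n : ℝ)⁻¹ • (x - y) := fun k => by
    simp only [z]; push_cast; module
  have hNstep : N ((n : ℝ)⁻¹ • (x - y)) = N (x - y) / n := by
    rw [hN.smul_of_nonneg (by positivity), inv_mul_eq_div]
  calc g x - g y = ∑ k ∈ Finset.range n, (g (z (k + 1)) - g (z k)) := by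
        rw [Finset.sum_range_sub (fun k => g (z k))]; simp [z, hn0.ne']
    _ ≤ ∑ k ∈ Finset.range n, L * (N (x - y) / n) := by
        refine Finset.sum_le_sum fun k _ => ?_
        have hclose : N (z (k + 1) - z k) ≤ ρ := by
          rw [hstep, hNstep, div_le_iff₀ hn0]
          rw [div_lt_iff₀ hρ] at hn
          linarith
        simpa only [hstep, hNstep] using hg _ _ hclose
    _ = L * N (x - y) := by
        rw [Finset.sum_const, Finset.card_range, nsmul_eq_mul]; field_simp

theorem LipWrt.le_add_sub {f : V → ℝ} (hf : LipWrt N f) (a b : V) : f a ≤ f b + N (a - b) := by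
  linarith [(abs_sub_le_iff.1 (hf a b)).1]

end NormFacts

section FiniteDimensionalNorm

variable {F : Type*} [NormedAddCommGroup F] [NormedSpace ℝ F] [FiniteDimensional ℝ F]
  {N : F → ℝ}

theorem IsNorm.continuous (hN : IsNorm N) : Continuous N :=
  continuousOn_univ.1 (hN.toSeminorm.convexOn.continuousOn isOpen_univ)

theorem IsNorm.exists_le_mul_norm (hN : IsNorm N) : ∃ c, 0 < c ∧ ∀ x, N x ≤ c * ‖x‖ :=
  hN.toSeminorm.bound_of_continuous_normedSpace hN.continuous

theorem IsNorm.exists_mul_norm_le (hN : IsNorm N) : ∃ c, 0 < c ∧ ∀ x, c * ‖x‖ ≤ N x := by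
  have hpos : ∀ x ∈ Metric.sphere (0 : F) 1, 0 < N x := fun x hx =>
    (hN.nonneg x).lt_of_ne' fun h => by simp [(hN.eq_zero_iff x).1 h] at hx
  obtain ⟨c, hc, hcN⟩ :=
    (isCompact_sphere 0 1).exists_forall_le' hN.continuous.continuousOn hpos
  refine ⟨c, hc, fun x => ?_⟩
  rcases eq_or_ne x 0 with rfl | hx
  · simp [hN.zero]
  have hxn : 0 < ‖x‖ := norm_pos_iff.2 hx
  have := hcN (‖x‖⁻¹ • x) (by simp [norm_smul, hxn.ne'])
  rw [hN.smul_of_nonneg (by positivity)] at this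
  rwa [le_inv_mul_iff₀ hxn, mul_comm] at this

end FiniteDimensionalNorm

theorem le_add_deriv_add_of_deriv2_le {g g' g'' : ℝ → ℝ} {B : ℝ}
    (hg : ∀ t ∈ Icc (0 : ℝ) 1, HasDerivAt g (g' t) t)
    (hg' : ∀ t ∈ Icc (0 : ℝ) 1, HasDerivAt g' (g'' t) t) (hB : ∀ t ∈ Icc (0 : ℝ) 1, g'' t ≤ B) :
    g 1 ≤ g 0 + g' 0 + B / 2 := by
  have hk : ∀ t ∈ Icc (0 : ℝ) 1,
      HasDerivAt (fun s => B / 2 * s ^ 2 - g s) (B * t - g' t) t := fun t ht =>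
    (((hasDerivAt_pow 2 t).const_mul (B / 2)).sub (hg t ht)).congr_deriv (by ring)
  have hconv : ConvexOn ℝ (Icc 0 1) fun s => B / 2 * s ^ 2 - g s := by
    refine convexOn_of_hasDerivWithinAt2_nonneg (convex_Icc 0 1)
      (fun t ht => (hk t ht).continuousAt.continuousWithinAt) (f' := fun t => B * t - g' t)
      (f'' := fun t => B - g'' t) ?_ ?_ ?_ <;> rw [interior_Icc] <;> intro t ht
    · exact (hk t (Ioo_subset_Icc_self ht)).hasDerivWithinAt
    · have := ((hasDerivAt_id t).const_mul B).sub (hg' t (Ioo_subset_Icc_self ht))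
      rw [mul_one] at this
      exact this.hasDerivWithinAt
    · linarith [hB t (Ioo_subset_Icc_self ht)]
  have := hconv.le_slope_of_hasDerivAt (left_mem_Icc.2 zero_le_one)
    (right_mem_Icc.2 zero_le_one) zero_lt_one (hk 0 (left_mem_Icc.2 zero_le_one))
  rw [slope_def_field] at this
  norm_num at this
  linarith

section ConvexDifferentiable

variable {F : Type*} [NormedAddCommGroup F] [NormedSpace ℝ F] {S : F → ℝ} {x : F}
  {ℓ : F →L[ℝ] ℝ}

theorem ConvexOn.add_le_of_hasFDerivAt (hS : ConvexOn ℝ univ S) (hd : HasFDerivAt S ℓ x)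
    (v : F) : S x + ℓ v ≤ S (x + v) := by
  have hline : HasDerivAt (fun t : ℝ => S (x + t • v)) (ℓ v) 0 :=
    hd.comp_hasDerivAt_of_eq 0
      (by simpa using ((hasDerivAt_id (0 : ℝ)).smul_const v).const_add x) (by simp)
  have hconv : ConvexOn ℝ univ fun t : ℝ => S (x + t • v) := by
    simpa [Function.comp_def, AffineMap.lineMap_apply_module', add_comm] using
      hS.comp_affineMap (AffineMap.lineMap x (x + v))
  have := hconv.le_slope_of_hasDerivAt (mem_univ 0) (mem_univ 1) zero_lt_one hline
  rw [slope_def_field] at this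
  norm_num at this
  linarith

theorem ConvexOn.hasFDerivAt_of_le_quadratic (hS : ConvexOn ℝ univ S) {C : ℝ}
    (hup : ∀ᶠ w in 𝓝 0, S (x + w) ≤ S x + ℓ w + C * ‖w‖ ^ 2) : HasFDerivAt S ℓ x := by
  rw [hasFDerivAt_iff_isLittleO_nhds_zero]
  refine Asymptotics.IsBigO.trans_isLittleO (g := fun w : F => ‖w‖ ^ 2) ?_
    (Asymptotics.isLittleO_norm_pow_id one_lt_two)
  have hup' : ∀ᶠ w in 𝓝 (0 : F), S (x + -w) ≤ S x + ℓ (-w) + C * ‖-w‖ ^ 2 :=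
    (continuous_neg.tendsto' (0 : F) 0 neg_zero).eventually hup
  refine Asymptotics.IsBigO.of_bound C ?_
  filter_upwards [hup, hup'] with w hpos hneg
  have hmid : S x ≤ (S (x + w) + S (x + -w)) / 2 := by
    have := hS.2 (mem_univ (x + w)) (mem_univ (x + -w)) (by norm_num : (0:ℝ) ≤ 1 / 2)
      (by norm_num : (0:ℝ) ≤ 1 / 2) (by norm_num)
    rw [show (1 / 2 : ℝ) • (x + w) + (1 / 2 : ℝ) • (x + -w) = x by module] at this
    simp only [smul_eq_mul] at this
    linarith
  rw [map_neg, norm_neg] at hneg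
  rw [Real.norm_eq_abs, Real.norm_eq_abs, abs_of_nonneg (by positivity : (0:ℝ) ≤ ‖w‖ ^ 2), abs_le]
  constructor <;> linarith

end ConvexDifferentiable

section InnerProduct

variable {H : Type*} [NormedAddCommGroup H] [InnerProductSpace ℝ H] {N : H → ℝ}

theorem dualNorm_le_of_forall_inner_le (hN : IsNorm N) {ξ : H} {b : ℝ}
    (h : ∀ w, N w ≤ 1 → ⟪ξ, w⟫ ≤ b) : dualNorm N ξ ≤ b :=
  csSup_le ⟨_, ⟨0, by simp [hN.zero], rfl⟩⟩ (by rintro _ ⟨w, hw, rfl⟩; exact h w hw)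

theorem inner_sub_le_of_le_quadratic (hN : IsNorm N) {S : H → ℝ} {p : H → H} {ρ L : ℝ}
    (hsub : ∀ x v, S x + ⟪p x, v⟫ ≤ S (x + v))
    (hup : ∀ x w, N w ≤ ρ → S (x + w) ≤ S x + ⟪p x, w⟫ + L / 2 * N w ^ 2)
    {x y w : H} (hxy : N (x - y) ≤ ρ) (hw : N w ≤ 1) :
    ⟪p x - p y, w⟫ ≤ L * N (x - y) := by
  have hside : ∀ a b v, N v ≤ ρ →
      S b + ⟪p b, a - b⟫ + ⟪p a - p b, v⟫ ≤ S a + L / 2 * N v ^ 2 := fun a b v hv => by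
    have hlower := hsub b (a - v - b)
    have hupper := hup a (-v) (by rwa [hN.neg])
    rw [show b + (a - v - b) = a + -v by abel] at hlower
    simp only [inner_sub_right, inner_sub_left, inner_neg_right, hN.neg] at hlower hupper ⊢
    linarith
  have hpair : ∀ v, N v ≤ ρ → 2 * ⟪p x - p y, v⟫ ≤ ⟪p x - p y, x - y⟫ + L * N v ^ 2 :=
    fun v hv => by
      have hxy' := hside x y v hv
      have hyx := hside y x (-v) (by rwa [hN.neg])
      simp only [inner_sub_right, inner_sub_left, inner_neg_right, hN.neg] at hxy' hyx ⊢
      linarith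
  rcases (hN.nonneg (x - y)).eq_or_lt with hn | hn
  · obtain rfl : x = y := sub_eq_zero.1 ((hN.eq_zero_iff _).1 hn.symm)
    simp [hN.zero]
  set n := N (x - y)
  -- the upper model and the subgradient inequality force `L ≥ 0`
  have hL : 0 ≤ L := by
    have := (hsub x (x - y)).trans (hup x (x - y) hxy)
    nlinarith [pow_pos hn 2]
  have hdiag : ⟪p x - p y, x - y⟫ ≤ L * n ^ 2 := by linarith [hpair (x - y) hxy]
  have hscaled := hpair (n • w) (by rw [hN.smul_of_nonneg hn.le]; nlinarith [hN.nonneg w])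
  rw [inner_smul_right, hN.smul_of_nonneg hn.le] at hscaled
  have hquad : L * (n * N w) ^ 2 ≤ L * n ^ 2 := by
    gcongr
    · exact mul_nonneg hn.le (hN.nonneg w)
    · exact mul_le_of_le_one_right hn.le hw
  refine le_of_mul_le_mul_left ?_ hn
  linarith

theorem contDiff_one_of_hasGradientAt [CompleteSpace H] {S : H → ℝ}
    {p : H → H} (hS : ∀ x, HasGradientAt S (p x) x)
    (hp : Continuous p) : ContDiff ℝ 1 S := by
  have hfd : fderiv ℝ S = fun x => InnerProductSpace.toDual ℝ H (p x) :=
    funext fun x => (hS x).hasFDerivAt.fderiv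
  exact contDiff_one_iff_fderiv.2 ⟨fun x => (hS x).differentiableAt,
    hfd ▸ (InnerProductSpace.toDual ℝ H).continuous.comp hp⟩

end InnerProduct

section FiniteDimensionalInner

variable {N : E → ℝ}

theorem IsNorm.exists_norm_le_of_inner_le (hN : IsNorm N) :
    ∃ c, 0 < c ∧ ∀ (ξ : E) (b : ℝ), (∀ w, N w ≤ 1 → ⟪ξ, w⟫ ≤ b) → ‖ξ‖ ≤ c * b := by
  obtain ⟨c, hc, hcN⟩ := hN.exists_le_mul_norm
  refine ⟨c, hc, fun ξ b h => ?_⟩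
  rcases eq_or_ne ξ 0 with rfl | hξ
  · simpa using mul_nonneg hc.le (by simpa using h 0 (by simp [hN.zero]))
  have hξn : 0 < ‖ξ‖ := norm_pos_iff.2 hξ
  have hw : N ((c * ‖ξ‖)⁻¹ • ξ) ≤ 1 := by
    rw [hN.smul_of_nonneg (by positivity), inv_mul_le_iff₀ (by positivity), mul_one]
    exact hcN ξ
  have := h _ hw
  rw [real_inner_smul_right, real_inner_self_eq_norm_sq, inv_mul_le_iff₀ (by positivity)] at this
  nlinarith

theorem continuous_of_forall_inner_sub_le (hN : IsNorm N) {p : E → E} {L : ℝ}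
    (hp : ∀ x y w, N w ≤ 1 → ⟪p x - p y, w⟫ ≤ L * N (x - y)) : Continuous p := by
  obtain ⟨c, hc, hcξ⟩ := hN.exists_norm_le_of_inner_le
  obtain ⟨c', hc', hc'N⟩ := hN.exists_le_mul_norm
  refine (LipschitzWith.of_dist_le' (K := c * |L| * c') fun x y => ?_).continuous
  rw [dist_eq_norm, dist_eq_norm, mul_assoc, mul_assoc]
  refine (hcξ _ _ (hp x y)).trans (mul_le_mul_of_nonneg_left ?_ hc.le)
  calc L * N (x - y) ≤ |L| * N (x - y) :=
        mul_le_mul_of_nonneg_right (le_abs_self L) (hN.nonneg _)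
    _ ≤ |L| * (c' * ‖x - y‖) := mul_le_mul_of_nonneg_left (hc'N _) (abs_nonneg L)

theorem ConvexOn.hasGradientAt_of_le_quadratic (hN : IsNorm N) {S : E → ℝ}
    (hS : ConvexOn ℝ univ S) {x p : E} {ρ C : ℝ} (hρ : 0 < ρ)
    (hup : ∀ w, N w ≤ ρ → S (x + w) ≤ S x + ⟪p, w⟫ + C * N w ^ 2) : HasGradientAt S p x := by
  obtain ⟨c, hc, hcN⟩ := hN.exists_le_mul_norm
  refine hasGradientAt_iff_hasFDerivAt.2 (hS.hasFDerivAt_of_le_quadratic (C := |C| * c ^ 2) ?_)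
  filter_upwards [(hN.continuous.tendsto' 0 0 hN.zero).eventually (gt_mem_nhds hρ)] with w hw
  calc S (x + w) ≤ S x + ⟪p, w⟫ + |C| * N w ^ 2 := by
        grw [hup w hw.le, le_abs_self C]
    _ ≤ S x + ⟪p, w⟫ + |C| * (c * ‖w‖) ^ 2 := by
        gcongr
        · exact hN.nonneg w
        · exact hcN w
    _ = _ := by rw [InnerProductSpace.toDual_apply_apply]; ring

end FiniteDimensionalInner

namespace SmoothingKernel

variable {N : E → ℝ} (K : SmoothingKernel E N)

theorem zero_mem_G : (0 : E) ∈ K.G := interior_subset K.zero_mem_int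

theorem hasFDerivAt_φ {u : E} (hu : u ∈ K.dom) : HasFDerivAt K.φ (fderiv ℝ K.φ u) u :=
  ((K.φ_smooth.contDiffAt (K.dom_open.mem_nhds hu)).differentiableAt (by norm_num)).hasFDerivAt

theorem hasFDerivAt_fderiv_φ {u : E} (hu : u ∈ K.dom) :
    HasFDerivAt (fderiv ℝ K.φ) (fderiv ℝ (fderiv ℝ K.φ) u) u :=
  (((K.φ_smooth.contDiffAt (K.dom_open.mem_nhds hu)).fderiv_right (m := 1) (by norm_num))
    |>.differentiableAt (by norm_num)).hasFDerivAt

def minimizerSet : Set E := {u ∈ K.G | K.φ u ≤ N u}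

theorem minimizerSet_subset_interior : K.minimizerSet ⊆ interior K.G := fun u ⟨huG, hu⟩ => by
  by_contra h
  exact (K.φ_gt_norm u ⟨subset_closure huG, h⟩).not_ge hu

theorem exists_add_mem_G (hN : IsNorm N) :
    ∃ ρ, 0 < ρ ∧ ∀ a ∈ K.minimizerSet, ∀ e, N e ≤ ρ → a + e ∈ K.G := by
  have hcompact : IsCompact K.minimizerSet :=
    K.G_compact.of_isClosed_subset (K.G_compact.isClosed.isClosed_le
      (K.φ_smooth.continuousOn.mono K.G_sub_dom) hN.continuous.continuousOn) (sep_subset _ _)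
  obtain ⟨r, hr, hthick⟩ :=
    hcompact.exists_thickening_subset_open isOpen_interior K.minimizerSet_subset_interior
  obtain ⟨c, hc, hcN⟩ := hN.exists_mul_norm_le
  refine ⟨c * r / 2, by positivity, fun a ha e he => interior_subset (hthick ?_)⟩
  refine Metric.ball_subset_thickening ha r ?_
  rw [Metric.mem_ball, dist_eq_norm, add_sub_cancel_left]
  nlinarith [hcN e]

end SmoothingKernel

theorem HessBound.φ_add_le {N : E → ℝ} {K : SmoothingKernel E N} {M : ℝ} (hM : HessBound K M)
    {u e : E} (hu : u ∈ K.G) (hue : u + e ∈ K.G) :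
    K.φ (u + e) ≤ K.φ u + fderiv ℝ K.φ u e + M / 2 * N e ^ 2 := by
  have hseg : ∀ t ∈ Icc (0 : ℝ) 1, u + t • e ∈ K.G := fun t ht => K.G_convex.add_smul_mem hu hue ht
  have hline : ∀ t : ℝ, HasDerivAt (fun s : ℝ => u + s • e) e t := fun t => by
    simpa using ((hasDerivAt_id t).smul_const e).const_add u
  have hg : ∀ t ∈ Icc (0 : ℝ) 1,
      HasDerivAt (fun t => K.φ (u + t • e)) (fderiv ℝ K.φ (u + t • e) e) t := fun t ht =>
    (K.hasFDerivAt_φ (K.G_sub_dom (hseg t ht))).comp_hasDerivAt t (hline t)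
  have hg' : ∀ t ∈ Icc (0 : ℝ) 1, HasDerivAt (fun t => fderiv ℝ K.φ (u + t • e) e)
      (fderiv ℝ (fderiv ℝ K.φ) (u + t • e) e e) t := fun t ht => by
    have := (K.hasFDerivAt_fderiv_φ (K.G_sub_dom (hseg t ht))).comp_hasDerivAt t (hline t)
    exact (ContinuousLinearMap.apply ℝ ℝ e).hasFDerivAt.comp_hasDerivAt t this
  have hB : ∀ t ∈ Icc (0 : ℝ) 1, fderiv ℝ (fderiv ℝ K.φ) (u + t • e) e e ≤ M * N e ^ 2 :=
    fun t ht => by simpa [iteratedFDeriv_two_apply] using hM _ (hseg t ht) e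
  have := le_add_deriv_add_of_deriv2_le hg hg' hB
  simp only [zero_smul, add_zero, one_smul] at this
  linarith

section Smoothing

variable {N : E → ℝ} (K : SmoothingKernel E N) {f : E → ℝ} {χ : ℝ}

theorem SmoothingKernel.exists_isMinOn (hN : IsNorm N) (hf : MemC N f) (hχ : 0 < χ) (x : E) :
    ∃ u ∈ K.minimizerSet, IsMinOn (fun v => f (x + χ • v) + χ * K.φ v) K.dom u := by
  have hfc : Continuous f := continuousOn_univ.1 (hf.1.continuousOn isOpen_univ)
  have hgc : ContinuousOn (fun v => f (x + χ • v) + χ * K.φ v) K.dom :=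
    (hfc.comp (by fun_prop)).continuousOn.add (continuousOn_const.mul K.φ_smooth.continuousOn)
  have hgconv : ConvexOn ℝ K.dom fun v => f (x + χ • v) + χ * K.φ v := by
    have := (hf.1.translate_right x).comp_linearMap (χ • LinearMap.id)
    simp only [preimage_univ] at this
    exact (this.subset (subset_univ _) K.dom_convex).add (K.φ_convex.smul hχ.le)
  obtain ⟨u, huG, hmin⟩ :=
    K.G_compact.exists_isMinOn ⟨0, K.zero_mem_G⟩ (hgc.mono K.G_sub_dom)
  have hu : u ∈ K.minimizerSet := by
    refine ⟨huG, le_of_mul_le_mul_left ?_ hχ⟩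
    have hle : f (x + χ • u) + χ * K.φ u ≤ f x := by simpa [K.φ_zero] using hmin K.zero_mem_G
    have hlip := hf.2.le_add_sub x (x + χ • u)
    rw [show x - (x + χ • u) = -(χ • u) by abel, hN.neg, hN.smul_of_nonneg hχ.le] at hlip
    linarith
  refine ⟨u, hu, IsMinOn.of_isLocalMinOn_of_convexOn (K.G_sub_dom huG) ?_ hgconv⟩
  exact (hmin.isLocalMin (mem_interior_iff_mem_nhds.1 (K.minimizerSet_subset_interior hu))).on _

theorem smoothingScaled_eq_of_isMinOn (hχ : χ ≠ 0) {x u : E} (hu : u ∈ K.dom)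
    (hmin : IsMinOn (fun v => f (x + χ • v) + χ * K.φ v) K.dom u) :
    smoothingScaled K χ f x = f (x + χ • u) + χ * K.φ u := by
  have himage : (fun h => f (x + h) + χ * K.φ (χ⁻¹ • h)) '' (χ • K.dom) =
      (fun v => f (x + χ • v) + χ * K.φ v) '' K.dom := by
    rw [← Set.image_smul, image_image]
    simp only [inv_smul_smul₀ hχ]
  rw [smoothingScaled, himage]
  exact (hmin.isGLB hu).csInf_eq ⟨_, mem_image_of_mem _ hu⟩

theorem exists_smoothingScaled_eq (hN : IsNorm N) (hf : MemC N f) (hχ : 0 < χ) (x : E) :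
    ∃ u ∈ K.minimizerSet, smoothingScaled K χ f x = f (x + χ • u) + χ * K.φ u := by
  obtain ⟨u, hu, hmin⟩ := K.exists_isMinOn hN hf hχ x
  exact ⟨u, hu, smoothingScaled_eq_of_isMinOn K hχ.ne' (K.G_sub_dom hu.1) hmin⟩

theorem smoothingScaled_le (hN : IsNorm N) (hf : MemC N f) (hχ : 0 < χ) {x v : E}
    (hv : v ∈ K.dom) : smoothingScaled K χ f x ≤ f (x + χ • v) + χ * K.φ v := by
  obtain ⟨u, hu, hmin⟩ := K.exists_isMinOn hN hf hχ x
  rw [smoothingScaled_eq_of_isMinOn K hχ.ne' (K.G_sub_dom hu.1) hmin]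
  exact hmin hv

theorem convexOn_smoothingScaled (hN : IsNorm N) (hf : MemC N f) (hχ : 0 < χ) :
    ConvexOn ℝ univ (smoothingScaled K χ f) := by
  refine ⟨convex_univ, fun x _ y _ a b ha hb hab => ?_⟩
  obtain ⟨u, hu, hSx⟩ := exists_smoothingScaled_eq K hN hf hχ x
  obtain ⟨v, hv, hSy⟩ := exists_smoothingScaled_eq K hN hf hχ y
  have hu' := K.G_sub_dom hu.1
  have hv' := K.G_sub_dom hv.1
  calc smoothingScaled K χ f (a • x + b • y)
      ≤ f (a • x + b • y + χ • (a • u + b • v)) + χ * K.φ (a • u + b • v) :=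
        smoothingScaled_le K hN hf hχ (K.dom_convex hu' hv' ha hb hab)
    _ = f (a • (x + χ • u) + b • (y + χ • v)) + χ * K.φ (a • u + b • v) := by
        congr 2; module
    _ ≤ a • f (x + χ • u) + b • f (y + χ • v) + χ * (a • K.φ u + b • K.φ v) := by
        gcongr
        · exact hf.1.2 (mem_univ _) (mem_univ _) ha hb hab
        · exact K.φ_convex.2 hu' hv' ha hb hab
    _ = a • smoothingScaled K χ f x + b • smoothingScaled K χ f y := by
        rw [hSx, hSy]; simp only [smul_eq_mul]; ring

theorem lipWrt_smoothingScaled (hN : IsNorm N) (hf : MemC N f) (hχ : 0 < χ) :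
    LipWrt N (smoothingScaled K χ f) := by
  have hle : ∀ x y, smoothingScaled K χ f x ≤ smoothingScaled K χ f y + N (x - y) := by
    intro x y
    obtain ⟨u, hu, hSy⟩ := exists_smoothingScaled_eq K hN hf hχ y
    calc smoothingScaled K χ f x ≤ f (x + χ • u) + χ * K.φ u :=
          smoothingScaled_le K hN hf hχ (K.G_sub_dom hu.1)
      _ ≤ f (y + χ • u) + N (x - y) + χ * K.φ u := by
          grw [hf.2.le_add_sub (x + χ • u) (y + χ • u), add_sub_add_right_eq_sub]
      _ = smoothingScaled K χ f y + N (x - y) := by rw [hSy]; ring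
  intro x y
  rw [abs_sub_le_iff]
  exact ⟨by linarith [hle x y], by rw [← hN.neg, neg_sub]; linarith [hle y x]⟩

theorem smoothingScaled_add_le (hN : IsNorm N) {M : ℝ} (hM : HessBound K M) (hf : MemC N f)
    (hχ : 0 < χ) {x u w : E} (hu : u ∈ K.G)
    (hSx : smoothingScaled K χ f x = f (x + χ • u) + χ * K.φ u) (huw : u + -(χ⁻¹ • w) ∈ K.G) :
    smoothingScaled K χ f (x + w) ≤
      smoothingScaled K χ f x + ⟪-gradient K.φ u, w⟫ + χ⁻¹ * M / 2 * N w ^ 2 := by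
  have hdesc := hM.φ_add_le hu huw
  have hgrad : fderiv ℝ K.φ u (-(χ⁻¹ • w)) = -(χ⁻¹ * ⟪gradient K.φ u, w⟫) := by
    simp [gradient, InnerProductSpace.toDual_symm_apply]
  rw [hgrad, hN.neg, hN.smul_of_nonneg (inv_nonneg.2 hχ.le)] at hdesc
  calc smoothingScaled K χ f (x + w)
      ≤ f (x + w + χ • (u + -(χ⁻¹ • w))) + χ * K.φ (u + -(χ⁻¹ • w)) :=
        smoothingScaled_le K hN hf hχ (K.G_sub_dom huw)
    _ = f (x + χ • u) + χ * K.φ (u + -(χ⁻¹ • w)) := by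
        rw [smul_add, smul_neg, smul_inv_smul₀ hχ.ne']; congr 2; abel
    _ ≤ f (x + χ • u) +
          χ * (K.φ u + -(χ⁻¹ * ⟪gradient K.φ u, w⟫) + M / 2 * (χ⁻¹ * N w) ^ 2) := by
        gcongr
    _ = smoothingScaled K χ f x + ⟪-gradient K.φ u, w⟫ + χ⁻¹ * M / 2 * N w ^ 2 := by
        rw [hSx, inner_neg_left]; field_simp; ring

end Smoothing

/-- the scaled smoothing `S_χ[f]` is convex, 1-Lipschitz w.r.t. `N`,
continuously differentiable, and its gradient is Lipschitz continuous with constant `M_φ/χ`: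
`‖∇S_χ[f](x) − ∇S_χ[f](y)‖_* ≤ χ⁻¹ M_φ ‖x − y‖` for all `x, y`. -/
theorem smoothingScaled_smoothness
    {N : E → ℝ} (hN : IsNorm N) (K : SmoothingKernel E N) (M : ℝ) (hM : HessBound K M)
    (f : E → ℝ) (hf : MemC N f) (χ : ℝ) (hχ : 0 < χ) :
    ConvexOn ℝ Set.univ (smoothingScaled K χ f) ∧
    LipWrt N (smoothingScaled K χ f) ∧
    ContDiff ℝ 1 (smoothingScaled K χ f) ∧
    ∀ x y : E, dualNorm N (gradient (smoothingScaled K χ f) x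
        - gradient (smoothingScaled K χ f) y) ≤ χ⁻¹ * M * N (x - y) := by
  set S := smoothingScaled K χ f
  choose u hu hSu using exists_smoothingScaled_eq K hN hf hχ
  set p : E → E := fun x => -gradient K.φ (u x)
  obtain ⟨ρ, hρ, hmargin⟩ := K.exists_add_mem_G hN
  have hconv : ConvexOn ℝ univ S := convexOn_smoothingScaled K hN hf hχ
  have hup : ∀ x w, N w ≤ χ * ρ → S (x + w) ≤ S x + ⟪p x, w⟫ + χ⁻¹ * M / 2 * N w ^ 2 :=
    fun x w hw => smoothingScaled_add_le K hN hM hf hχ (hu x).1 (hSu x) <|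
      hmargin _ (hu x) _ <| by
        rwa [hN.neg, hN.smul_of_nonneg (inv_nonneg.2 hχ.le), inv_mul_le_iff₀ hχ]
  have hgrad : ∀ x, HasGradientAt S (p x) x := fun x =>
    hconv.hasGradientAt_of_le_quadratic hN (by positivity) (hup x)
  have hsub : ∀ x v, S x + ⟪p x, v⟫ ≤ S (x + v) := fun x =>
    hconv.add_le_of_hasFDerivAt (hgrad x).hasFDerivAt
  have hlip : ∀ x y w, N w ≤ 1 → ⟪p x - p y, w⟫ ≤ χ⁻¹ * M * N (x - y) := fun x y w hw => by
    simpa only [inner_sub_left] using hN.sub_le_mul_of_local (g := fun z => ⟪p z, w⟫)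
      (by positivity : 0 < χ * ρ) (fun a b hab => by
        simpa only [inner_sub_left] using inner_sub_le_of_le_quadratic hN hsub hup hab hw) x y
  refine ⟨hconv, lipWrt_smoothingScaled K hN hf hχ,
    contDiff_one_of_hasGradientAt hgrad (continuous_of_forall_inner_sub_le hN hlip),
    fun x y => ?_⟩
  rw [(hgrad x).gradient, (hgrad y).gradient]
  exact dualNorm_le_of_forall_inner_le hN (hlip x y)
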